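/- Let σ be a permutation of size n with σₙ = n. There is a bijection between the preimages of σ under the bubblesort operator B and the subsets of the set of left-to-right maxima of σ different from n. Explicitly, for a subset S = {s₁ < ⋯ < s_j} of left-to-right maxima different from n, writing σ = B₀ s₁ B₁ s₂ B₂ ⋯ s_j B_j n, the corresponding preimage is s₁ B₀ s₂ B₁ ⋯ s_j B_{j−1} n B_j. -/

import Mathlib

/-!
Cut a word τ with distinct entries in front of each of its left-to-right maxima:
τ = s₁ B₀ s₂ B₁ ⋯ s_k B_{k-1}, where s₁ < ⋯ < s_k and every entry of Bᵢ is below s_{i+1}.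
One pass of bubblesort carries each sᵢ across its block and leaves it in front of the next,
larger, maximum, so B(τ) = B₀ s₁ B₁ s₂ ⋯ B_{k-1} s_k. Conversely, in a word
B₀ s₁ ⋯ B_{k-1} s_k the sᵢ are left-to-right maxima exactly when each block lies below the
pivot that follows it. As the cut of τ is unique (Bᵢ is the longest run after s_{i+1} of
entries below it), the preimages of σ with σₙ = n correspond to the increasing lists of
left-to-right maxima of σ that end in n.
-/

/-- One pass of bubblesort on a list of naturals. -/
def bpass : List ℕ → List ℕ
  | [] => []
  | [a] => [a]
  | a :: b :: l => if b < a then b :: bpass (a :: l) else a :: bpass (b :: l)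

/-- The identity permutation 1 2 ... n as a list. -/
def idList (n : ℕ) : List ℕ := List.map (· + 1) (List.range n)

/-- `l` is (the word of) a permutation of size `n`, i.e. a rearrangement of 1,...,n. -/
def IsPermList (n : ℕ) (l : List ℕ) : Prop := l.Perm (idList n)

/-- position `j` of `l` holds a left-to-right maximum. -/
def IsLTRMax (l : List ℕ) (j : ℕ) : Prop :=
  j < l.length ∧ ∀ i < j, l.getD i 0 < l.getD j 0

instance (l : List ℕ) (j : ℕ) : Decidable (IsLTRMax l j) := by
  unfold IsLTRMax; infer_instance

/-- the number of left-to-right maxima of `l`. -/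
def ltrCount (l : List ℕ) : ℕ :=
  ((List.range l.length).filter fun j => decide (IsLTRMax l j)).length

/-- the length of the longest suffix of `l` consisting of left-to-right maxima. -/
def suffLen (l : List ℕ) : ℕ :=
  ((List.range l.length).takeWhile fun j => decide (IsLTRMax l (l.length - 1 - j))).length

/-- `σ` is a node of the tree `T(π)` of iterated bubblesort preimages. -/
def IsNode (n : ℕ) (π σ : List ℕ) : Prop :=
  IsPermList n σ ∧ ∃ j, bpass^[j] σ = π

/-- `σ` is a node of `T(π)` at height `j` (j passes needed to reach π, and no fewer). -/
def IsNodeAt (n : ℕ) (π σ : List ℕ) (j : ℕ) : Prop :=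
  IsPermList n σ ∧ bpass^[j] σ = π ∧ ∀ i < j, bpass^[i] σ ≠ π

/-- `τ` is a leaf: it has no child, i.e. no bubblesort preimage other than itself. -/
def IsLeafNode (n : ℕ) (τ : List ℕ) : Prop :=
  ¬ ∃ ρ, IsPermList n ρ ∧ ρ ≠ τ ∧ bpass ρ = τ

/-- `T(π)` and `T(τ)` are isomorphic as rooted trees: there is a bijection between
their node sets sending root to root and commuting with the parent map `bpass`. -/
def TreeIso (n : ℕ) (π τ : List ℕ) : Prop :=
  ∃ φ : List ℕ → List ℕ,
    (∀ σ, IsNode n π σ → IsNode n τ (φ σ)) ∧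
    (∀ σ σ', IsNode n π σ → IsNode n π σ' → φ σ = φ σ' → σ = σ') ∧
    (∀ ρ, IsNode n τ ρ → ∃ σ, IsNode n π σ ∧ φ σ = ρ) ∧
    φ π = τ ∧
    (∀ σ, IsNode n π σ → σ ≠ π → φ (bpass σ) = bpass (φ σ))

lemma IsPermList.nodup {n : ℕ} {l : List ℕ} (h : IsPermList n l) : l.Nodup :=
  h.nodup_iff.2 (List.nodup_range.map (add_left_injective 1))

lemma IsPermList.le_of_mem {n x : ℕ} {l : List ℕ} (h : IsPermList n l) (hx : x ∈ l) : x ≤ n := by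
  have := h.subset hx
  simp only [idList, List.mem_map, List.mem_range] at this
  omega

namespace Bubblesort

lemma bpass_perm (l : List ℕ) : (bpass l).Perm l := by
  induction l using bpass.induct with
  | case1 | case2 => simp [bpass]
  | case3 a b l h ih => rw [bpass, if_pos h]; exact (ih.cons b).trans (.swap a b l)
  | case4 a b l h ih => rw [bpass, if_neg h]; exact ih.cons a

lemma bpass_cons_of_forall_mem_head?_le {a : ℕ} {l : List ℕ} (h : ∀ b ∈ l.head?, a ≤ b) :
    bpass (a :: l) = a :: bpass l := by
  match l, h with
  | [], _ => simp [bpass]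
  | b :: l, h => rw [bpass, if_neg (not_lt.2 (h b rfl))]

lemma bpass_cons_append_of_forall_lt {c : ℕ} {D : List ℕ} (r : List ℕ) (h : ∀ d ∈ D, d < c) :
    bpass (c :: (D ++ r)) = D ++ bpass (c :: r) := by
  induction D with
  | nil => rfl
  | cons d D ih =>
    rw [List.forall_mem_cons] at h
    rw [List.cons_append, bpass, if_pos h.1, ih h.2, List.cons_append]

def joinPivotFirst (Q : List (ℕ × List ℕ)) : List ℕ := Q.flatMap fun q => q.1 :: q.2

def joinPivotLast (Q : List (ℕ × List ℕ)) : List ℕ := Q.flatMap fun q => q.2 ++ [q.1]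

def IsPivotDecomp (Q : List (ℕ × List ℕ)) : Prop :=
  (Q.map Prod.fst).Pairwise (· < ·) ∧ ∀ q ∈ Q, ∀ b ∈ q.2, b < q.1

@[simp] lemma joinPivotFirst_nil : joinPivotFirst [] = [] := rfl

@[simp] lemma joinPivotFirst_cons (q : ℕ × List ℕ) (Q : List (ℕ × List ℕ)) :
    joinPivotFirst (q :: Q) = q.1 :: (q.2 ++ joinPivotFirst Q) := rfl

@[simp] lemma joinPivotLast_nil : joinPivotLast [] = [] := rfl

@[simp] lemma joinPivotLast_cons (q : ℕ × List ℕ) (Q : List (ℕ × List ℕ)) :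
    joinPivotLast (q :: Q) = q.2 ++ q.1 :: joinPivotLast Q := by
  simp [joinPivotLast]

@[simp] lemma joinPivotLast_append (Q Q' : List (ℕ × List ℕ)) :
    joinPivotLast (Q ++ Q') = joinPivotLast Q ++ joinPivotLast Q' := by
  simp [joinPivotLast]

lemma head?_joinPivotFirst (Q : List (ℕ × List ℕ)) :
    (joinPivotFirst Q).head? = Q.head?.map Prod.fst := by
  cases Q <;> rfl

lemma getLast?_joinPivotLast (Q : List (ℕ × List ℕ)) :
    (joinPivotLast Q).getLast? = Q.getLast?.map Prod.fst := by
  induction Q using List.reverseRecOn <;> simp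

lemma flatMap_zip_eq_joinPivotLast (A : List ℕ) (Bs : List (List ℕ)) :
    (Bs.zip A).flatMap (fun q => q.1 ++ [q.2]) = joinPivotLast (A.zip Bs) := by
  rw [← List.zip_swap, joinPivotLast, List.flatMap_map]
  rfl

lemma isPivotDecomp_cons {s : ℕ} {B : List ℕ} {R : List (ℕ × List ℕ)} :
    IsPivotDecomp ((s, B) :: R) ↔ (∀ b ∈ B, b < s) ∧ (∀ q ∈ R, s < q.1) ∧ IsPivotDecomp R := by
  simp only [IsPivotDecomp, List.map_cons, List.pairwise_cons, List.forall_mem_cons,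
    List.forall_mem_map]
  tauto

lemma IsPivotDecomp.cons_nil {a : ℕ} {P : List (ℕ × List ℕ)} (hP : IsPivotDecomp P)
    (ha : ∀ x ∈ (joinPivotFirst P).head?, a < x) : IsPivotDecomp ((a, []) :: P) := by
  refine isPivotDecomp_cons.2 ⟨by simp, ?_, hP⟩
  match P, hP, ha with
  | [], _, _ => simp
  | (s, B) :: R, hP, ha =>
    have has : a < s := ha s rfl
    simp only [List.forall_mem_cons]
    exact ⟨has, fun q hq => has.trans ((isPivotDecomp_cons.1 hP).2.1 q hq)⟩

theorem bpass_joinPivotFirst {Q : List (ℕ × List ℕ)} (hQ : IsPivotDecomp Q) :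
    bpass (joinPivotFirst Q) = joinPivotLast Q := by
  induction Q with
  | nil => simp [bpass]
  | cons q R ih =>
    obtain ⟨s, B⟩ := q
    obtain ⟨hB, hsR, hR⟩ := isPivotDecomp_cons.1 hQ
    have hhead : ∀ x ∈ (joinPivotFirst R).head?, s ≤ x := by
      simpa [head?_joinPivotFirst] using fun a B hq => (hsR (a, B) (List.mem_of_mem_head? hq)).le
    rw [joinPivotFirst_cons, bpass_cons_append_of_forall_lt _ hB,
      bpass_cons_of_forall_mem_head?_le hhead, ih hR, joinPivotLast_cons]

theorem exists_isPivotDecomp_joinPivotFirst_eq {l : List ℕ} (hl : l.Nodup) :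
    ∃ P, IsPivotDecomp P ∧ joinPivotFirst P = l := by
  induction l using bpass.induct with
  | case1 => exact ⟨[], by simp [IsPivotDecomp], rfl⟩
  | case2 a => exact ⟨[(a, [])], by simp [IsPivotDecomp], rfl⟩
  | case3 a b l hba ih =>
    obtain ⟨P, hP, hPl⟩ := ih (hl.sublist ((List.sublist_cons_self b l).cons_cons a))
    match P, hP, hPl with
    | (a', B) :: R, hP, hPl =>
      simp only [joinPivotFirst_cons, List.cons.injEq] at hPl
      obtain ⟨rfl, rfl⟩ := hPl
      obtain ⟨hB, hsR, hR⟩ := isPivotDecomp_cons.1 hP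
      exact ⟨(a', b :: B) :: R,
        isPivotDecomp_cons.2 ⟨List.forall_mem_cons.2 ⟨hba, hB⟩, hsR, hR⟩, rfl⟩
  | case4 a b l hab ih =>
    obtain ⟨P, hP, hPl⟩ := ih hl.of_cons
    have hne : a ≠ b := fun h => (List.nodup_cons.1 hl).1 (h ▸ List.mem_cons_self)
    refine ⟨(a, []) :: P, hP.cons_nil ?_, by simp [hPl]⟩
    simpa [hPl] using lt_of_le_of_ne (not_lt.1 hab) hne

lemma takeWhile_append_joinPivotFirst {s : ℕ} {B : List ℕ} {R : List (ℕ × List ℕ)}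
    (hQ : IsPivotDecomp ((s, B) :: R)) : (B ++ joinPivotFirst R).takeWhile (· < s) = B := by
  obtain ⟨hB, hsR, -⟩ := isPivotDecomp_cons.1 hQ
  rw [List.takeWhile_append_of_pos (by simpa using hB)]
  match R, hsR with
  | [], _ => simp
  | q :: R, hsR => simp [(hsR q List.mem_cons_self).le]

theorem joinPivotFirst_injOn : Set.InjOn joinPivotFirst {Q | IsPivotDecomp Q} := by
  intro Q hQ Q' hQ' h
  induction Q generalizing Q' with
  | nil => cases Q' <;> simp_all
  | cons q R ih =>
    match Q', hQ', h with
    | [], _, h => simp at h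
    | q' :: R', hQ', h =>
      obtain ⟨s, B⟩ := q
      obtain ⟨s', B'⟩ := q'
      simp only [joinPivotFirst_cons, List.cons.injEq] at h
      obtain ⟨rfl, h⟩ := h
      obtain rfl : B = B' := by
        rw [← takeWhile_append_joinPivotFirst hQ, h, takeWhile_append_joinPivotFirst hQ']
      rw [ih (isPivotDecomp_cons.1 hQ).2.2 (isPivotDecomp_cons.1 hQ').2.2
        (List.append_cancel_left h)]


def IsLTRMaxEntry (l : List ℕ) (s : ℕ) : Prop := ∃ j, IsLTRMax l j ∧ l.getD j 0 = s

lemma isLTRMaxEntry_iff {l : List ℕ} {s : ℕ} :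
    IsLTRMaxEntry l s ↔ ∃ a b, l = a ++ s :: b ∧ ∀ x ∈ a, x < s := by
  constructor
  · rintro ⟨j, ⟨hj, hmax⟩, rfl⟩
    rw [List.getD_eq_getElem _ _ hj]
    refine ⟨l.take j, l.drop (j + 1), ?_, fun x hx => ?_⟩
    · rw [← List.drop_eq_getElem_cons hj, List.take_append_drop]
    · obtain ⟨i, hi, rfl⟩ := List.mem_take_iff_getElem.1 hx
      have := hmax i (lt_of_lt_of_le hi (min_le_left _ _))
      rwa [List.getD_eq_getElem _ _ hj, List.getD_eq_getElem] at this
  · rintro ⟨a, b, rfl, ha⟩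
    have hs : (a ++ s :: b).getD a.length 0 = s := by simp
    refine ⟨a.length, ⟨by simp, fun i hi => ?_⟩, hs⟩
    rw [hs, List.getD_append _ _ _ _ hi, List.getD_eq_getElem _ _ hi]
    exact ha _ (List.getElem_mem hi)

lemma IsLTRMaxEntry.mem {l : List ℕ} {s : ℕ} (h : IsLTRMaxEntry l s) : s ∈ l := by
  obtain ⟨a, b, rfl, -⟩ := isLTRMaxEntry_iff.1 h
  simp

lemma IsLTRMaxEntry.of_append {l₁ l₂ : List ℕ} {s : ℕ} (h : IsLTRMaxEntry (l₁ ++ l₂) s)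
    (hl₁ : ∀ x ∈ l₁, x < s) : IsLTRMaxEntry l₂ s := by
  obtain ⟨a, b, hab, ha⟩ := isLTRMaxEntry_iff.1 h
  rcases List.append_eq_append_iff.1 hab with ⟨c, rfl, rfl⟩ | ⟨c, rfl, hc⟩
  · exact isLTRMaxEntry_iff.2 ⟨c, b, rfl, fun x hx => ha x (by simp [hx])⟩
  · cases c with
    | nil => exact isLTRMaxEntry_iff.2 ⟨[], b, by simpa using hc.symm, by simp⟩
    | cons x c =>
      obtain ⟨rfl, -⟩ := List.cons.inj hc
      exact absurd (hl₁ s (by simp)) (lt_irrefl s)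

lemma IsLTRMaxEntry.forall_lt {a b : List ℕ} {s : ℕ} (hnd : (a ++ s :: b).Nodup)
    (h : IsLTRMaxEntry (a ++ s :: b) s) : ∀ x ∈ a, x < s := by
  obtain ⟨c, d, hcd, hc⟩ := isLTRMaxEntry_iff.1 h
  rcases List.append_eq_append_iff.1 hcd with ⟨e, rfl, -⟩ | ⟨e, rfl, he⟩
  · exact fun x hx => hc x (by simp [hx])
  · cases e with
    | nil => simpa using hc
    | cons y e =>
      obtain ⟨rfl, -⟩ := List.cons.inj he
      exact absurd hnd (by simp [List.nodup_append])

lemma isLTRMaxEntry_of_getLast? {l : List ℕ} {n : ℕ} (hnd : l.Nodup) (hle : ∀ x ∈ l, x ≤ n)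
    (hl : l.getLast? = some n) : IsLTRMaxEntry l n := by
  obtain ⟨a, rfl⟩ := List.getLast?_eq_some_iff.1 hl
  refine isLTRMaxEntry_iff.2 ⟨a, [], rfl, fun x hx => (hle x (by simp [hx])).lt_of_ne ?_⟩
  rintro rfl
  exact absurd hnd (by simp [List.nodup_append, hx])

lemma isLTRMaxEntry_joinPivotLast {Q : List (ℕ × List ℕ)} (hQ : IsPivotDecomp Q)
    {q : ℕ × List ℕ} (hq : q ∈ Q) : IsLTRMaxEntry (joinPivotLast Q) q.1 := by
  obtain ⟨Q₁, Q₂, rfl⟩ := List.append_of_mem hq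
  have hpiv : ∀ p ∈ Q₁, p.1 < q.1 := by
    have := (List.pairwise_append.1 (List.map_append ▸ hQ.1)).2.2
    exact fun p hp => this _ (List.mem_map_of_mem hp) _ (by simp)
  refine isLTRMaxEntry_iff.2 ⟨joinPivotLast Q₁ ++ q.2, joinPivotLast Q₂, by simp, fun x hx => ?_⟩
  rcases List.mem_append.1 hx with hx | hx
  · obtain ⟨p, hp, hxp⟩ := List.mem_flatMap.1 hx
    have hpq := hpiv p hp
    rcases List.mem_append.1 hxp with hxp | hxp
    · exact (hQ.2 p (by simp [hp]) x hxp).trans hpq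
    · exact (List.mem_singleton.1 hxp) ▸ hpq
  · exact hQ.2 q hq x hx

lemma forall_lt_of_isLTRMaxEntry_joinPivotLast {Q : List (ℕ × List ℕ)}
    (hnd : (joinPivotLast Q).Nodup) (h : ∀ q ∈ Q, IsLTRMaxEntry (joinPivotLast Q) q.1) :
    ∀ q ∈ Q, ∀ b ∈ q.2, b < q.1 := by
  intro q hq b hb
  obtain ⟨Q₁, Q₂, rfl⟩ := List.append_of_mem hq
  have hsplit : joinPivotLast (Q₁ ++ q :: Q₂) =
      (joinPivotLast Q₁ ++ q.2) ++ q.1 :: joinPivotLast Q₂ := by simp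
  rw [hsplit] at hnd h
  exact (h q hq).forall_lt hnd b (by simp [hb])


theorem exists_joinPivotLast_eq {n : ℕ} {ss m : List ℕ} (hm : m.getLast? = some n)
    (hss : ss.IsChain (· < ·)) (hmax : ∀ s ∈ ss, s ≠ n ∧ IsLTRMaxEntry m s) :
    ∃ Q, Q.map Prod.fst = ss ++ [n] ∧ joinPivotLast Q = m := by
  induction ss generalizing m with
  | nil =>
    obtain ⟨B, rfl⟩ := List.getLast?_eq_some_iff.1 hm
    exact ⟨[(n, B)], rfl, by simp⟩
  | cons s ss ih =>
    obtain ⟨hsn, hs⟩ := hmax s List.mem_cons_self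
    obtain ⟨a, b, rfl, ha⟩ := isLTRMaxEntry_iff.1 hs
    have hb : b.getLast? = some n := by
      cases hb : b.getLast? <;> simp_all [List.getLast?_append, List.getLast?_cons]
    have hlt : ∀ s' ∈ ss, s < s' := (List.pairwise_cons.1 (List.isChain_iff_pairwise.1 hss)).1
    obtain ⟨Q, hQ, rfl⟩ := ih hb hss.tail fun s' hs' => by
      refine ⟨(hmax s' (by simp [hs'])).1, ?_⟩
      refine (List.append_cons a s b ▸ (hmax s' (by simp [hs'])).2).of_append fun x hx => ?_
      rcases List.mem_append.1 hx with hx | hx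
      · exact (ha x hx).trans (hlt s' hs')
      · exact List.mem_singleton.1 hx ▸ hlt s' hs'
    exact ⟨(s, a) :: Q, by simp [hQ], joinPivotLast_cons _ _⟩

theorem isPivotDecomp_zip {n : ℕ} {σ ss : List ℕ} {Bs : List (List ℕ)} (hnd : σ.Nodup)
    (hle : ∀ x ∈ σ, x ≤ n) (hn : IsLTRMaxEntry σ n) (hss : ss.IsChain (· < ·))
    (hmax : ∀ s ∈ ss, s ≠ n ∧ IsLTRMaxEntry σ s) (hlen : Bs.length = ss.length + 1)
    (hσ : σ = joinPivotLast ((ss ++ [n]).zip Bs)) : IsPivotDecomp ((ss ++ [n]).zip Bs) := by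
  have hfst : ((ss ++ [n]).zip Bs).map Prod.fst = ss ++ [n] := List.map_fst_zip (by simp [hlen])
  refine ⟨?_, ?_⟩
  · rw [hfst]
    refine List.pairwise_append.2 ⟨List.isChain_iff_pairwise.1 hss, List.pairwise_singleton _ _,
      fun s hs x hx => ?_⟩
    obtain ⟨hsn, hsσ⟩ := hmax s hs
    exact List.mem_singleton.1 hx ▸ (hle s hsσ.mem).lt_of_ne hsn
  · subst hσ
    refine forall_lt_of_isLTRMaxEntry_joinPivotLast hnd fun q hq => ?_
    rcases List.mem_append.1 (hfst ▸ List.mem_map_of_mem hq) with h | h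
    · exact (hmax _ h).2
    · exact List.mem_singleton.1 h ▸ hn

lemma eq_of_zip_append_singleton_eq {n : ℕ} {p p' : List ℕ × List (List ℕ)}
    (hp : p.2.length = p.1.length + 1) (hp' : p'.2.length = p'.1.length + 1)
    (h : (p.1 ++ [n]).zip p.2 = (p'.1 ++ [n]).zip p'.2) : p = p' := by
  have hfst := congrArg (List.map Prod.fst) h
  have hsnd := congrArg (List.map Prod.snd) h
  rw [List.map_fst_zip (by simp [hp]), List.map_fst_zip (by simp [hp'])] at hfst
  rw [List.map_snd_zip (by simp [hp]), List.map_snd_zip (by simp [hp'])] at hsnd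
  exact Prod.ext (List.append_cancel_right hfst) hsnd

lemma zip_map_fst_append_map_snd_append (P : List (ℕ × List ℕ)) (n : ℕ) (B : List ℕ) :
    (P.map Prod.fst ++ [n]).zip (P.map Prod.snd ++ [B]) = P ++ [(n, B)] := by
  rw [List.zip_append (by simp), ← List.unzip_fst, ← List.unzip_snd, List.zip_unzip]
  rfl

theorem IsPivotDecomp.isChain_and_forall_isLTRMaxEntry {P : List (ℕ × List ℕ)} {n : ℕ}
    {B : List ℕ} (hP : IsPivotDecomp (P ++ [(n, B)])) :
    (P.map Prod.fst).IsChain (· < ·) ∧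
      ∀ s ∈ P.map Prod.fst, s ≠ n ∧ IsLTRMaxEntry (joinPivotLast (P ++ [(n, B)])) s := by
  have hlt := (List.pairwise_append.1 (List.map_append ▸ hP.1)).2.2
  refine ⟨List.isChain_iff_pairwise.2 (hP.1.sublist (by simp)), fun s hs => ?_⟩
  obtain ⟨q, hq, rfl⟩ := List.mem_map.1 hs
  exact ⟨(hlt _ hs n (by simp)).ne, isLTRMaxEntry_joinPivotLast hP (by simp [hq])⟩

end Bubblesort

open Bubblesort in
/-- Explicit bijection between the bubblesort preimages of `σ` (with `σₙ = n`) and the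
subsets `S = {s₁ < ⋯ < s_j}` of the left-to-right maxima of `σ` different from `n`:
writing `σ = B₀ s₁ B₁ s₂ ⋯ s_j B_j n`, the preimage corresponding to `S` is
`s₁ B₀ s₂ B₁ ⋯ s_j B_{j-1} n B_j`. -/
theorem stmt_5 (n : ℕ) (σ : List ℕ) (hσ : IsPermList n σ) (hlast : σ.getLast? = some n) :
    -- every subset of the left-to-right maxima of σ different from n yields a
    -- (unique) decomposition σ = B₀ s₁ B₁ s₂ ⋯ s_j B_j n ...
    (∀ ss : List ℕ, ss.Chain' (· < ·) →
      (∀ s ∈ ss, s ≠ n ∧ ∃ j, IsLTRMax σ j ∧ σ.getD j 0 = s) →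
      ∃ Bs : List (List ℕ), Bs.length = ss.length + 1 ∧
        σ = (Bs.zip (ss ++ [n])).flatMap fun q => q.1 ++ [q.2]) ∧
    -- ... and τ is a preimage of σ iff it arises from exactly one such subset as
    -- τ = s₁ B₀ s₂ B₁ ⋯ s_j B_{j-1} n B_j.
    (∀ τ : List ℕ, bpass τ = σ ↔
      ∃! p : List ℕ × List (List ℕ),
        p.1.Chain' (· < ·) ∧
        (∀ s ∈ p.1, s ≠ n ∧ ∃ j, IsLTRMax σ j ∧ σ.getD j 0 = s) ∧
        p.2.length = p.1.length + 1 ∧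
        σ = (p.2.zip (p.1 ++ [n])).flatMap (fun q => q.1 ++ [q.2]) ∧
        τ = ((p.1 ++ [n]).zip p.2).flatMap (fun q => q.1 :: q.2)) := by
  have hnd := hσ.nodup
  have hle : ∀ x ∈ σ, x ≤ n := fun x => hσ.le_of_mem
  have hn : IsLTRMaxEntry σ n := isLTRMaxEntry_of_getLast? hnd hle hlast
  refine ⟨fun ss hss hmax => ?_, fun τ => ⟨fun hτ => ?_, ?_⟩⟩
  · obtain ⟨Q, hQ, rfl⟩ := exists_joinPivotLast_eq hlast hss hmax
    refine ⟨Q.map Prod.snd, by simp [← List.length_map (f := Prod.fst), hQ], ?_⟩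
    rw [flatMap_zip_eq_joinPivotLast, ← hQ, ← List.unzip_fst, ← List.unzip_snd, List.zip_unzip]
  · obtain ⟨P, hP, rfl⟩ := exists_isPivotDecomp_joinPivotFirst_eq
      ((bpass_perm τ).nodup_iff.1 (hτ ▸ hnd))
    rw [bpass_joinPivotFirst hP] at hτ
    subst hτ
    obtain ⟨⟨n', B⟩, hPlast, rfl⟩ : ∃ q, P.getLast? = some q ∧ q.1 = n := by
      simpa [getLast?_joinPivotLast] using hlast
    obtain ⟨P, rfl⟩ := List.getLast?_eq_some_iff.1 hPlast
    have hzip := zip_map_fst_append_map_snd_append P n' B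
    obtain ⟨hPchain, hPmax⟩ := hP.isChain_and_forall_isLTRMaxEntry
    refine ⟨(P.map Prod.fst, P.map Prod.snd ++ [B]), ⟨hPchain, hPmax, by simp, ?_, ?_⟩, ?_⟩
    · rw [flatMap_zip_eq_joinPivotLast, hzip]
    · exact congrArg joinPivotFirst hzip.symm
    · rintro p ⟨hss, hmax, hlen, hσp, hτp⟩
      rw [flatMap_zip_eq_joinPivotLast] at hσp
      have hpP := joinPivotFirst_injOn (isPivotDecomp_zip hnd hle hn hss hmax hlen hσp) hP hτp.symm
      exact eq_of_zip_append_singleton_eq hlen (by simp) (hpP.trans hzip.symm)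
  · rintro ⟨p, ⟨hss, hmax, hlen, hσp, rfl⟩, -⟩
    rw [flatMap_zip_eq_joinPivotLast] at hσp
    rw [hσp]
    exact bpass_joinPivotFirst (isPivotDecomp_zip hnd hle hn hss hmax hlen hσp)
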